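/- arXiv:1410.5644 — 5 statements merged into one kernel-verified Lean document; each statement's English description precedes it below -/
import Mathlib

section
/- Discrete charge conservation of the temporal semi-discretization (Proposition 2.1): Let L > 0, Δt > 0, let Q, W : ℝ → ℝ be continuous L-periodic functions, and let u, v : ℝ → ℂ be twice continuously differentiable L-periodic functions satisfying the one-step implicit midpoint relation i·(v(x) − u(x)) = −Δt·(w''(x) + Q(x)·w(x)) + w(x)·W(x) for all x ∈ ℝ, where w = (u + v)/2. Then ∫₀ᴸ |v(x)|² dx = ∫₀ᴸ |u(x)|² dx. -/
open MeasureTheory Complex ComplexConjugate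

/-!
With `w = (u + v)/2`, one has `|v|² - |u|² = 2 Re(conj w · (v - u))`. Solving the scheme for
`v - u`, the potential and noise terms contribute `conj w · i(ΔtQ - W) w`, which is purely
imaginary, so `|v|² - |u|² = -2Δt Im(conj w · w'')`. The right side is the derivative of the
periodic function `Im(conj w · w')`, because `Im(conj w' · w') = 0`; hence it integrates to zero
over a period.
-/

theorem Function.Periodic.deriv {𝕜 F : Type*} [NontriviallyNormedField 𝕜] [NormedAddCommGroup F]
    [NormedSpace 𝕜 F] {f : 𝕜 → F} {c : 𝕜} (hf : Function.Periodic f c) :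
    Function.Periodic (deriv f) c := fun x => by
  rw [← deriv_comp_add_const, show (fun y => f (y + c)) = f from funext hf]

theorem normSq_sub_normSq_of_midpoint_step {a b d : ℂ} {Δt q W : ℝ}
    (h : I * (b - a) = -(Δt : ℂ) * (d + q * ((a + b) / 2)) + (a + b) / 2 * W) :
    normSq b - normSq a = -(2 * Δt) * (conj ((a + b) / 2) * d).im := by
  have hre := congrArg re h
  have him := congrArg im h
  simp only [mul_re, mul_im, add_re, add_im, sub_re, sub_im, neg_re, neg_im, I_re, I_im,
    ofReal_re, ofReal_im, div_ofNat_re, div_ofNat_im] at hre him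
  simp only [normSq_apply, mul_im, conj_re, conj_im, div_ofNat_re, div_ofNat_im, add_re, add_im]
  linear_combination (a.re + b.re) * him - (a.im + b.im) * hre

theorem hasDerivAt_im_conj_mul {f f' : ℝ → ℂ} {f'' : ℂ} {x : ℝ}
    (hf : HasDerivAt f (f' x) x) (hf' : HasDerivAt f' f'' x) :
    HasDerivAt (fun y => (conj (f y) * f' y).im) (conj (f x) * f'').im x := by
  have hconj : HasDerivAt (fun y => conj (f y)) (conj (f' x)) x := hf.star
  refine (imCLM.hasFDerivAt.comp_hasDerivAt x (hconj.mul hf')).congr_deriv ?_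
  rw [imCLM_apply, add_im, ← normSq_eq_conj_mul_self, ofReal_im, zero_add]

theorem integral_im_conj_mul_deriv_deriv_of_periodic {w : ℝ → ℂ} {L : ℝ}
    (hw : ContDiff ℝ 2 w) (hwp : Function.Periodic w L) :
    ∫ x in (0 : ℝ)..L, (conj (w x) * deriv (deriv w) x).im = 0 := by
  have hw' : ContDiff ℝ 1 (deriv w) := hw.iterate_deriv' 1 1
  have hderiv x : HasDerivAt (fun y => (conj (w y) * deriv w y).im)
      (conj (w x) * deriv (deriv w) x).im x :=
    hasDerivAt_im_conj_mul (hw.differentiable two_ne_zero x).hasDerivAt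
      (hw'.differentiable one_ne_zero x).hasDerivAt
  have hcont : Continuous fun x => (conj (w x) * deriv (deriv w) x).im :=
    continuous_im.comp ((continuous_conj.comp hw.continuous).mul (hw'.continuous_deriv le_rfl))
  rw [intervalIntegral.integral_eq_sub_of_hasDerivAt (fun x _ => hderiv x)
    (hcont.intervalIntegrable 0 L), hwp.eq, hwp.deriv.eq, sub_self]

theorem midpoint_step_charge_conservation_general
    (L Δt : ℝ)
    (Q W : ℝ → ℝ)
    (u v : ℝ → ℂ) (hu : ContDiff ℝ 2 u) (hv : ContDiff ℝ 2 v)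
    (hup : Function.Periodic u L) (hvp : Function.Periodic v L)
    (hstep : ∀ x : ℝ,
      Complex.I * (v x - u x) =
        -(Δt : ℂ) * (deriv (deriv (fun y => (u y + v y) / 2)) x
            + (Q x : ℂ) * ((u x + v x) / 2))
          + ((u x + v x) / 2) * (W x : ℂ)) :
    ∫ x in (0:ℝ)..L, ‖v x‖ ^ 2
      = ∫ x in (0:ℝ)..L, ‖u x‖ ^ 2 := by
  set w : ℝ → ℂ := fun y => (u y + v y) / 2
  have hwp : Function.Periodic w L := fun x => by simp only [w, hup x, hvp x]
  have hcharge x : ‖v x‖ ^ 2 - ‖u x‖ ^ 2 = -(2 * Δt) * (conj (w x) * deriv (deriv w) x).im := by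
    rw [Complex.sq_norm, Complex.sq_norm]
    exact normSq_sub_normSq_of_midpoint_step (hstep x)
  have hint (f : ℝ → ℂ) (hf : Continuous f) : IntervalIntegrable (fun x => ‖f x‖ ^ 2) volume 0 L :=
    (hf.norm.pow 2).intervalIntegrable 0 L
  rw [← sub_eq_zero, ← intervalIntegral.integral_sub (hint v hv.continuous) (hint u hu.continuous)]
  simp only [hcharge, intervalIntegral.integral_const_mul]
  rw [integral_im_conj_mul_deriv_deriv_of_periodic ((hu.add hv).div_const 2) hwp, mul_zero]

/-- Discrete charge conservation of the temporal semi-discretization (Proposition 2.1):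
one step of the implicit midpoint scheme for the stochastic linear Schrödinger equation,
with `L`-periodic data, preserves the charge `∫₀ᴸ |u|²`. -/
theorem midpoint_step_charge_conservation
    (L Δt : ℝ) (hL : 0 < L) (hΔt : 0 < Δt)
    (Q W : ℝ → ℝ) (hQc : Continuous Q) (hWc : Continuous W)
    (hQp : Function.Periodic Q L) (hWp : Function.Periodic W L)
    (u v : ℝ → ℂ) (hu : ContDiff ℝ 2 u) (hv : ContDiff ℝ 2 v)
    (hup : Function.Periodic u L) (hvp : Function.Periodic v L)
    (hstep : ∀ x : ℝ,
      Complex.I * (v x - u x) =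
        -(Δt : ℂ) * (deriv (deriv (fun y => (u y + v y) / 2)) x
            + (Q x : ℂ) * ((u x + v x) / 2))
          + ((u x + v x) / 2) * (W x : ℂ)) :
    ∫ x in (0:ℝ)..L, ‖v x‖ ^ 2
      = ∫ x in (0:ℝ)..L, ‖u x‖ ^ 2 :=
  midpoint_step_charge_conservation_general L Δt Q W u v hu hv hup hvp hstep
end

section
/- Symplecticity of the implicit midpoint scheme (Proposition 2.2), expressed as preservation of the symplectic form on pairs of solutions: Let L > 0, Δt > 0, let Q, W : ℝ → ℝ be continuous L-periodic functions, and let (u, v) and (ũ, ṽ) be two pairs of twice continuously differentiable L-periodic functions ℝ → ℂ, each satisfying the one-step implicit midpoint relation i·(v − u) = −Δt·(w'' + Q·w) + w·W with w = (u + v)/2 (respectively w̃ = (ũ + ṽ)/2 for the second pair), with the same Q, W and Δt. Then Im ∫₀ᴸ v(x)·conj(ṽ(x)) dx = Im ∫₀ᴸ u(x)·conj(ũ(x)) dx. -/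
open MeasureTheory Complex ComplexConjugate

theorem integral_mul_conj_deriv_deriv_sub {f g : ℝ → ℂ} (hf : ContDiff ℝ 2 f)
    (hg : ContDiff ℝ 2 g) (a b : ℝ) :
    ∫ x in a..b, (f x * conj (deriv (deriv g) x) - deriv (deriv f) x * conj (g x)) =
      (f b * conj (deriv g b) - deriv f b * conj (g b)) -
        (f a * conj (deriv g a) - deriv f a * conj (g a)) := by
  have hderiv : ∀ x, HasDerivAt (fun x => f x * conj (deriv g x) - deriv f x * conj (g x))
      (f x * conj (deriv (deriv g) x) - deriv (deriv f) x * conj (g x)) x := fun x => by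
    have hfg' : HasDerivAt (fun y => f y * conj (deriv g y))
        (deriv f x * conj (deriv g x) + f x * conj (deriv (deriv g) x)) x :=
      (hf.differentiable two_ne_zero x).hasDerivAt.mul
        (hg.differentiable_deriv_two x).hasDerivAt.star
    have hf'g : HasDerivAt (fun y => deriv f y * conj (g y))
        (deriv (deriv f) x * conj (g x) + deriv f x * conj (deriv g x)) x :=
      (hf.differentiable_deriv_two x).hasDerivAt.mul
        (hg.differentiable two_ne_zero x).hasDerivAt.star
    exact (hfg'.sub hf'g).congr_deriv (by ring)
  have hcont :
      Continuous fun x => f x * conj (deriv (deriv g) x) - deriv (deriv f) x * conj (g x) :=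
    (hf.continuous.mul (continuous_conj.comp hg.deriv'.continuous_deriv_one)).sub
      (hf.deriv'.continuous_deriv_one.mul (continuous_conj.comp hg.continuous))
  exact intervalIntegral.integral_eq_sub_of_hasDerivAt (fun x _ => hderiv x)
    (hcont.intervalIntegrable a b)

theorem integral_mul_conj_deriv_deriv_sub_eq_zero_of_periodic {f g : ℝ → ℂ} {L : ℝ}
    (hf : ContDiff ℝ 2 f) (hg : ContDiff ℝ 2 g) (hfp : Function.Periodic f L)
    (hgp : Function.Periodic g L) (a : ℝ) :
    ∫ x in a..a + L, (f x * conj (deriv (deriv g) x) - deriv (deriv f) x * conj (g x)) = 0 := by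
  rw [integral_mul_conj_deriv_deriv_sub hf hg, hfp, hgp, hfp.deriv, hgp.deriv, sub_self]

theorem midpoint_step_mul_conj_sub {u v ut vt z zt : ℂ} {dt q w : ℝ}
    (hs : I * (v - u) = -(dt : ℂ) * (z + q * ((u + v) / 2)) + (u + v) / 2 * w)
    (hst : I * (vt - ut) = -(dt : ℂ) * (zt + q * ((ut + vt) / 2)) + (ut + vt) / 2 * w) :
    v * conj vt - u * conj ut =
      -I * dt * ((u + v) / 2 * conj zt - z * conj ((ut + vt) / 2)) := by
  have hst' := congrArg conj hst
  simp only [map_mul, map_sub, map_add, map_neg, map_div₀, map_ofNat, conj_I, conj_ofReal]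
    at hst' ⊢
  linear_combination (-I * ((conj ut + conj vt) / 2)) * hs + (I * ((u + v) / 2)) * hst'
    + (v * conj vt - u * conj ut) * I_sq

theorem midpoint_step_symplectic_general
    (L Δt : ℝ)
    (Q W : ℝ → ℝ)
    (u v ut vt : ℝ → ℂ)
    (hu : ContDiff ℝ 2 u) (hv : ContDiff ℝ 2 v)
    (hut : ContDiff ℝ 2 ut) (hvt : ContDiff ℝ 2 vt)
    (hup : Function.Periodic u L) (hvp : Function.Periodic v L)
    (hutp : Function.Periodic ut L) (hvtp : Function.Periodic vt L)
    (hstep : ∀ x : ℝ,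
      Complex.I * (v x - u x) =
        -(Δt : ℂ) * (deriv (deriv (fun y => (u y + v y) / 2)) x
            + (Q x : ℂ) * ((u x + v x) / 2))
          + ((u x + v x) / 2) * (W x : ℂ))
    (hstept : ∀ x : ℝ,
      Complex.I * (vt x - ut x) =
        -(Δt : ℂ) * (deriv (deriv (fun y => (ut y + vt y) / 2)) x
            + (Q x : ℂ) * ((ut x + vt x) / 2))
          + ((ut x + vt x) / 2) * (W x : ℂ)) :
    (∫ x in (0:ℝ)..L, v x * conj (vt x)).im
      = (∫ x in (0:ℝ)..L, u x * conj (ut x)).im := by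
  set w : ℝ → ℂ := fun y => (u y + v y) / 2
  set wt : ℝ → ℂ := fun y => (ut y + vt y) / 2
  have hwp : Function.Periodic w L := fun x => by simp only [w, hup x, hvp x]
  have hwtp : Function.Periodic wt L := fun x => by simp only [wt, hutp x, hvtp x]
  have hpointwise : ∀ x, v x * conj (vt x) - u x * conj (ut x) =
      -I * Δt * (w x * conj (deriv (deriv wt) x) - deriv (deriv w) x * conj (wt x)) :=
    fun x => midpoint_step_mul_conj_sub (hstep x) (hstept x)
  have hwronskian := integral_mul_conj_deriv_deriv_sub_eq_zero_of_periodic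
    ((hu.add hv).div_const 2) ((hut.add hvt).div_const 2) hwp hwtp 0
  rw [zero_add] at hwronskian
  have hdiff :
      (∫ x in (0:ℝ)..L, v x * conj (vt x)) - ∫ x in (0:ℝ)..L, u x * conj (ut x) = 0 := by
    rw [← intervalIntegral.integral_sub ((by fun_prop : Continuous _).intervalIntegrable 0 L)
        ((by fun_prop : Continuous _).intervalIntegrable 0 L),
      intervalIntegral.integral_congr fun x _ => hpointwise x,
      intervalIntegral.integral_const_mul, hwronskian, mul_zero]
  exact congrArg im (sub_eq_zero.mp hdiff)

/-- Symplecticity of the implicit midpoint scheme (Proposition 2.2), expressed as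
preservation of the symplectic form `ω(u, ũ) = Im ∫₀ᴸ u · conj(ũ)` on pairs of solutions
of one implicit midpoint step for the stochastic linear Schrödinger equation. -/
theorem midpoint_step_symplectic
    (L Δt : ℝ) (hL : 0 < L) (hΔt : 0 < Δt)
    (Q W : ℝ → ℝ) (hQc : Continuous Q) (hWc : Continuous W)
    (hQp : Function.Periodic Q L) (hWp : Function.Periodic W L)
    (u v ut vt : ℝ → ℂ)
    (hu : ContDiff ℝ 2 u) (hv : ContDiff ℝ 2 v)
    (hut : ContDiff ℝ 2 ut) (hvt : ContDiff ℝ 2 vt)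
    (hup : Function.Periodic u L) (hvp : Function.Periodic v L)
    (hutp : Function.Periodic ut L) (hvtp : Function.Periodic vt L)
    (hstep : ∀ x : ℝ,
      Complex.I * (v x - u x) =
        -(Δt : ℂ) * (deriv (deriv (fun y => (u y + v y) / 2)) x
            + (Q x : ℂ) * ((u x + v x) / 2))
          + ((u x + v x) / 2) * (W x : ℂ))
    (hstept : ∀ x : ℝ,
      Complex.I * (vt x - ut x) =
        -(Δt : ℂ) * (deriv (deriv (fun y => (ut y + vt y) / 2)) x
            + (Q x : ℂ) * ((ut x + vt x) / 2))
          + ((ut x + vt x) / 2) * (W x : ℂ)) :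
    (∫ x in (0:ℝ)..L, v x * conj (vt x)).im
      = (∫ x in (0:ℝ)..L, u x * conj (ut x)).im :=
  midpoint_step_symplectic_general L Δt Q W u v ut vt hu hv hut hvt hup hvp hutp hvtp hstep hstept
end

section
/- Per-cell energy identity with numerical entropy flux (the key identity (19)–(22) in the proof of Theorem 2.3): Let Δt > 0, α < β, let u⁰, u¹, ψ : [α,β] → ℂ be continuously differentiable, write u = (u⁰ + u¹)/2, let Q, W : [α,β] → ℝ be continuous, and let P ∈ ℂ (the exterior right-sided trace of ψ at β) and U ∈ ℂ (the exterior left-sided trace of u at α) be given. Assume the two cell variational equations hold: (E1) i∫_α^β (u¹ − u⁰)·conj(u) dx − Δt·[P·conj(u(β)) − ψ(α)·conj(u(α))] + Δt·∫_α^β (ψ·(conj u)' − Q·u·conj(u)) dx − ∫_α^β u·conj(u)·W dx = 0, and (E2) ∫_α^β ψ·conj(ψ) dx + ∫_α^β u·(conj ψ)' dx − [u(β)·conj(ψ(β)) − U·conj(ψ(α))] = 0. Then ∫_α^β (|u¹(x)|² − |u⁰(x)|²) dx = 2Δt·[Im(P·conj(u(β))) − Im(ψ(α)·conj(U))]; equivalently,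 ∫_α^β (|u¹|² − |u⁰|²) dx + Φ̂(β) − Φ̂(α) = 0 with numerical entropy flux Φ̂(β) = −2Δt·Im(P·conj(u(β))) and Φ̂(α) = −2Δt·Im(ψ(α)·conj(U)). -/
/-!
Take imaginary parts of both cell equations. With `u = (u⁰ + u¹)/2` one has
`Re((u¹ - u⁰) conj u) = (|u¹|² - |u⁰|²)/2`, so the first term of (E1) becomes half the energy
change, while the `Q`, `W` and `|ψ|²` integrals are real and drop out. The two remaining volume
integrals `∫ ψ (conj u)'` and `∫ u (conj ψ)'` are related by integration by parts, which turns
them into boundary terms; the interior traces `ψ(α) conj u(α)` and `ψ(β) conj u(β)` then cancel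
against those of (E1) and (E2), leaving only the numerical fluxes `P` and `U`.
-/

open MeasureTheory Complex ComplexConjugate Set

section IntegrationByParts

variable {A : Type*} [NormedRing A] [NormedAlgebra ℝ A] [CompleteSpace A] {a b : ℝ} {f g : ℝ → A}

theorem ContDiffOn.integral_mul_derivWithin_add_integral_derivWithin_mul (hab : a < b)
    (hf : ContDiffOn ℝ 1 f (Icc a b)) (hg : ContDiffOn ℝ 1 g (Icc a b)) :
    (∫ x in a..b, f x * derivWithin g (Icc a b) x)
      + (∫ x in a..b, derivWithin f (Icc a b) x * g x) = f b * g b - f a * g a := by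
  have hs : uIcc a b = Icc a b := uIcc_of_le hab.le
  have hderiv : ∀ {h : ℝ → A}, ContDiffOn ℝ 1 h (Icc a b) →
      ∀ x ∈ uIcc a b, HasDerivWithinAt h (derivWithin h (Icc a b) x) (uIcc a b) x :=
    fun hh x hx ↦ hs ▸ ((hh.differentiableOn one_ne_zero) x (hs ▸ hx)).hasDerivWithinAt
  have hint : ∀ {h : ℝ → A}, ContDiffOn ℝ 1 h (Icc a b) →
      IntervalIntegrable (derivWithin h (Icc a b)) volume a b :=
    fun hh ↦ (hh.continuousOn_derivWithin (uniqueDiffOn_Icc hab) le_rfl).intervalIntegrable_of_Icc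
      hab.le
  rw [intervalIntegral.integral_mul_deriv_eq_deriv_mul_of_hasDerivWithinAt (hderiv hf) (hderiv hg)
    (hint hf) (hint hg), sub_add_cancel]

end IntegrationByParts

theorem ContDiffOn.conj {E : Type*} [NormedAddCommGroup E] [NormedSpace ℝ E] {n : WithTop ℕ∞}
    {f : E → ℂ} {s : Set E} (hf : ContDiffOn ℝ n f s) :
    ContDiffOn ℝ n (fun y ↦ conj (f y)) s :=
  conjCLE.contDiff.comp_contDiffOn hf

namespace Complex

theorem norm_sq_sub_norm_sq_eq_two_mul_re (a b : ℂ) :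
    ‖b‖ ^ 2 - ‖a‖ ^ 2 = 2 * ((b - a) * conj ((a + b) / 2)).re := by
  simp only [← normSq_eq_norm_sq, normSq_apply, mul_re, sub_re, sub_im, conj_re, conj_im,
    div_ofNat_re, div_ofNat_im, add_re, add_im]
  ring

theorem im_mul_conj_comm (z w : ℂ) : (z * conj w).im = -(w * conj z).im := by
  simp only [mul_im, conj_re, conj_im]
  ring

theorem im_intervalIntegral_eq_zero {a b : ℝ} {f : ℝ → ℂ} (hf : ∀ x, (f x).im = 0) :
    (∫ x in a..b, f x).im = 0 := by
  have hf_real : f = fun x ↦ ((f x).re : ℂ) := funext fun x ↦ ext rfl (by simp [hf])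
  rw [hf_real, intervalIntegral.integral_ofReal, ofReal_im]

theorem im_intervalIntegral_sub_of_im_eq_zero {a b : ℝ} {f g : ℝ → ℂ}
    (hf : IntervalIntegrable f volume a b) (hg : IntervalIntegrable g volume a b)
    (hg_im : ∀ x, (g x).im = 0) :
    (∫ x in a..b, f x - g x).im = (∫ x in a..b, f x).im := by
  rw [intervalIntegral.integral_sub hf hg, sub_im, im_intervalIntegral_eq_zero hg_im, sub_zero]

theorem integral_norm_sq_sub_norm_sq_eq_two_mul_re {a b : ℝ} {v w u : ℝ → ℂ} (hab : a ≤ b)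
    (hv : ContinuousOn v (Icc a b)) (hw : ContinuousOn w (Icc a b))
    (hu : u = fun x ↦ (v x + w x) / 2) :
    ∫ x in a..b, (‖w x‖ ^ 2 - ‖v x‖ ^ 2) = 2 * (∫ x in a..b, (w x - v x) * conj (u x)).re := by
  subst hu
  have hint : IntervalIntegrable (fun x ↦ (w x - v x) * conj ((v x + w x) / 2)) volume a b :=
    ((hw.sub hv).mul ((hv.add hw).div_const 2).star).intervalIntegrable_of_Icc hab
  calc ∫ x in a..b, (‖w x‖ ^ 2 - ‖v x‖ ^ 2)
      = ∫ x in a..b, 2 * ((w x - v x) * conj ((v x + w x) / 2)).re :=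
        intervalIntegral.integral_congr fun x _ ↦ norm_sq_sub_norm_sq_eq_two_mul_re _ _
    _ = _ := by
        rw [intervalIntegral.integral_const_mul]
        exact congrArg (2 * ·) (intervalIntegral.intervalIntegral_re hint)

theorem integral_mul_derivWithin_conj_add_conj_integral {a b : ℝ} {f g : ℝ → ℂ} (hab : a < b)
    (hf : ContDiffOn ℝ 1 f (Icc a b)) (hg : ContDiffOn ℝ 1 g (Icc a b)) :
    (∫ x in a..b, f x * derivWithin (fun y ↦ conj (g y)) (Icc a b) x)
      + conj (∫ x in a..b, g x * derivWithin (fun y ↦ conj (f y)) (Icc a b) x)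
      = f b * conj (g b) - f a * conj (g a) := by
  rw [← hf.integral_mul_derivWithin_add_integral_derivWithin_mul hab hg.conj,
    ← intervalIntegral.intervalIntegral_conj]
  congr 1
  refine intervalIntegral.integral_congr fun x _ ↦ ?_
  have hderiv_conj : derivWithin (fun y ↦ conj (f y)) (Icc a b) x = conj (derivWithin f (Icc a b) x) :=
    derivWithin.star
  rw [hderiv_conj, map_mul, conj_conj, mul_comm]

end Complex

theorem ldg_cell_energy_identity_general
    (Δt α β : ℝ) (hαβ : α < β)
    (u0 u1 ψ : ℝ → ℂ)
    (hu0 : ContDiffOn ℝ 1 u0 (Set.Icc α β))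
    (hu1 : ContDiffOn ℝ 1 u1 (Set.Icc α β))
    (hψ : ContDiffOn ℝ 1 ψ (Set.Icc α β))
    (Q W : ℝ → ℝ)
    (hQ : ContinuousOn Q (Set.Icc α β))
    (P U : ℂ)
    (u : ℝ → ℂ) (hu : u = fun x => (u0 x + u1 x) / 2)
    (hE1 : Complex.I * (∫ x in α..β, (u1 x - u0 x) * conj (u x))
        - (Δt : ℂ) * (P * conj (u β) - ψ α * conj (u α))
        + (Δt : ℂ) * (∫ x in α..β,
            (ψ x * derivWithin (fun y => conj (u y)) (Set.Icc α β) x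
              - (Q x : ℂ) * (u x * conj (u x))))
        - (∫ x in α..β, u x * conj (u x) * (W x : ℂ)) = 0)
    (hE2 : (∫ x in α..β, ψ x * conj (ψ x))
        + (∫ x in α..β, u x * derivWithin (fun y => conj (ψ y)) (Set.Icc α β) x)
        - (u β * conj (ψ β) - U * conj (ψ α)) = 0) :
    (∫ x in α..β, ((‖u1 x‖) ^ 2 - (‖u0 x‖) ^ 2))
      = 2 * Δt * ((P * conj (u β)).im - (ψ α * conj U).im) := by
  have hu_smooth : ContDiffOn ℝ 1 u (Icc α β) := hu ▸ (hu0.add hu1).div_const 2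
  have hu_cont := hu_smooth.continuousOn
  have hC_int : IntervalIntegrable (fun x ↦ ψ x * derivWithin (fun y ↦ conj (u y)) (Icc α β) x)
      volume α β :=
    (hψ.continuousOn.mul (hu_smooth.conj.continuousOn_derivWithin (uniqueDiffOn_Icc hαβ)
      le_rfl)).intervalIntegrable_of_Icc hαβ.le
  have hQ_int : IntervalIntegrable (fun x ↦ (Q x : ℂ) * (u x * conj (u x))) volume α β :=
    ((continuous_ofReal.comp_continuousOn hQ).mul
      (hu_cont.mul hu_cont.star)).intervalIntegrable_of_Icc hαβ.le
  have hW_im : (∫ x in α..β, u x * conj (u x) * (W x : ℂ)).im = 0 :=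
    im_intervalIntegral_eq_zero fun x ↦ by simp [mul_conj]
  have hE1_im := congrArg im hE1
  rw [sub_im, add_im, sub_im, I_mul_im, im_ofReal_mul, im_ofReal_mul, hW_im, zero_im, sub_im,
    im_intervalIntegral_sub_of_im_eq_zero hC_int hQ_int fun x ↦ by simp [mul_conj]] at hE1_im
  have hE2_im := congrArg im hE2
  rw [sub_im, add_im, sub_im, zero_im,
    im_intervalIntegral_eq_zero fun x ↦ by simp [mul_conj]] at hE2_im
  have hparts := congrArg im (integral_mul_derivWithin_conj_add_conj_integral hαβ hψ hu_smooth)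
  rw [add_im, conj_im, sub_im] at hparts
  rw [integral_norm_sq_sub_norm_sq_eq_two_mul_re hαβ.le hu0.continuousOn hu1.continuousOn hu]
  linear_combination 2 * hE1_im - 2 * Δt * hparts - 2 * Δt * hE2_im
    - 2 * Δt * im_mul_conj_comm (u β) (ψ β) + 2 * Δt * im_mul_conj_comm U (ψ α)

/-- Per-cell energy identity with numerical entropy flux (identity (19)–(22) in the proof of
Theorem 2.3) for the symplectic local discontinuous Galerkin method on a single cell `[α,β]`:
if the two cell variational equations (E1), (E2) hold, with exterior trace `P` of `ψ` at `β`
and exterior trace `U` of `u` at `α`, then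
`∫_α^β (|u¹|² − |u⁰|²) = 2Δt (Im(P conj(u β)) − Im(ψ(α) conj U))`. -/
theorem ldg_cell_energy_identity
    (Δt α β : ℝ) (hΔt : 0 < Δt) (hαβ : α < β)
    (u0 u1 ψ : ℝ → ℂ)
    (hu0 : ContDiffOn ℝ 1 u0 (Set.Icc α β))
    (hu1 : ContDiffOn ℝ 1 u1 (Set.Icc α β))
    (hψ : ContDiffOn ℝ 1 ψ (Set.Icc α β))
    (Q W : ℝ → ℝ)
    (hQ : ContinuousOn Q (Set.Icc α β)) (hW : ContinuousOn W (Set.Icc α β))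
    (P U : ℂ)
    (u : ℝ → ℂ) (hu : u = fun x => (u0 x + u1 x) / 2)
    (hE1 : Complex.I * (∫ x in α..β, (u1 x - u0 x) * conj (u x))
        - (Δt : ℂ) * (P * conj (u β) - ψ α * conj (u α))
        + (Δt : ℂ) * (∫ x in α..β,
            (ψ x * derivWithin (fun y => conj (u y)) (Set.Icc α β) x
              - (Q x : ℂ) * (u x * conj (u x))))
        - (∫ x in α..β, u x * conj (u x) * (W x : ℂ)) = 0)
    (hE2 : (∫ x in α..β, ψ x * conj (ψ x))
        + (∫ x in α..β, u x * derivWithin (fun y => conj (ψ y)) (Set.Icc α β) x)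
        - (u β * conj (ψ β) - U * conj (ψ α)) = 0) :
    (∫ x in α..β, ((‖u1 x‖) ^ 2 - (‖u0 x‖) ^ 2))
      = 2 * Δt * ((P * conj (u β)).im - (ψ α * conj U).im) :=
  ldg_cell_energy_identity_general Δt α β hαβ u0 u1 ψ hu0 hu1 hψ Q W hQ P U u hu hE1 hE2
end

section
/- Discrete charge conservation law of the symplectic local discontinuous Galerkin method (Theorem 2.3): Let Δt > 0 and let L_f = x_{1/2} < x_{3/2} < ⋯ < x_{J+1/2} = L_r be a partition of [L_f, L_r] into cells I_j = [x_{j−1/2}, x_{j+1/2}], j = 1,…,J. For each j let u_j^n, u_j^{n+1}, ψ_j : I_j → ℂ be continuously differentiable, write u_j = (u_j^n + u_j^{n+1})/2, and let Q_h, ΔW̃ : [L_f, L_r] → ℝ be continuous. Define the numerical fluxes with periodic identification x_{1/2} ≡ x_{J+1/2}: at each interior node x_{j+1/2} set û_{j+1/2} = u_j(x_{j+1/2}) (left value) and ψ̂_{j+1/2} = ψ_{j+1}(x_{j+1/2}) (right value), and set ψ̂_{J+1/2} = ψ_1(x_{1/2}), û_{1/2} = u_J(x_{J+1/2}). Assume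 that for every j = 1,…,J: (E1_j) i∫_{I_j}(u_j^{n+1} − u_j^n)·conj(u_j) dx − Δt·[ψ̂_{j+1/2}·conj(u_j)(x_{j+1/2}) − ψ_j(x_{j−1/2})·conj(u_j)(x_{j−1/2})] + Δt·∫_{I_j}(ψ_j·(conj u_j)' − Q_h·u_j·conj(u_j)) dx − ∫_{I_j} u_j·conj(u_j)·ΔW̃ dx = 0, and (E2_j) ∫_{I_j} ψ_j·conj(ψ_j) dx + ∫_{I_j} u_j·(conj ψ_j)' dx − [u_j(x_{j+1/2})·conj(ψ_j)(x_{j+1/2}) − û_{j−1/2}·conj(ψ_j)(x_{j−1/2})] = 0. Then ∑_{j=1}^{J} ∫_{I_j} |u_j^{n+1}(x)|² dx = ∑_{j=1}^{J} ∫_{I_j} |u_j^n(x)|² dx. -/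
open MeasureTheory Complex ComplexConjugate

/-! Taking imaginary parts of (E1) turns its time-difference term into half the change of the
charge on the cell, while the potential and noise terms drop out because they are real.
Integration by parts together with (E2) reduces `Im ∫ ψ (conj u)'` to boundary values, so the
charge of each cell changes by `2 Δt` times the imaginary parts of the two flux products at its
endpoints. With `û = u⁻` and `ψ̂ = ψ⁺`, the flux a cell receives through a node is
`Im (u⁻ conj ψ⁺) = -Im (ψ⁺ conj u⁻)`, exactly the negative of what its left neighbour loses
there, so the contributions cancel in pairs around the periodic mesh. -/

open Set

theorem Finset.sum_range_comp_cyclicPred {M : Type*} [AddCommMonoid M] (f : ℕ → M) (J : ℕ) :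
    ∑ c ∈ Finset.range J, f (if c = 0 then J - 1 else c - 1) = ∑ c ∈ Finset.range J, f c := by
  cases J with
  | zero => rfl
  | succ K =>
    rw [Finset.sum_range_succ', Finset.sum_range_succ]
    simp only [Nat.succ_ne_zero, if_false, if_true, Nat.add_sub_cancel]

theorem Complex.im_mul_conj_add_swap (z w : ℂ) : (z * conj w).im + (w * conj z).im = 0 := by
  simp only [mul_im, conj_re, conj_im]
  ring

theorem Complex.re_sub_mul_conj_midpoint (z w : ℂ) :
    ((z - w) * conj ((w + z) / 2)).re = (‖z‖ ^ 2 - ‖w‖ ^ 2) / 2 := by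
  simp only [Complex.sq_norm, normSq_apply, mul_re, sub_re, sub_im, conj_re, conj_im, div_re,
    div_im, add_re, add_im]
  norm_num
  ring

theorem derivWithin_conj {f : ℝ → ℂ} {s : Set ℝ} {t : ℝ} :
    derivWithin (fun y => conj (f y)) s t = conj (derivWithin f s t) := by
  simpa only [← Complex.star_def] using derivWithin.star

theorem intervalIntegral.integral_conj {𝕜 : Type*} [RCLike 𝕜] {f : ℝ → 𝕜} {a b : ℝ}
    {μ : Measure ℝ} : ∫ t in a..b, conj (f t) ∂μ = conj (∫ t in a..b, f t ∂μ) := by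
  simp only [intervalIntegral, _root_.integral_conj, map_sub]

theorem intervalIntegral.im_integral_eq_zero_of_im_eq_zero {f : ℝ → ℂ} {a b : ℝ}
    {μ : Measure ℝ} (hf : ∀ t, (f t).im = 0) : (∫ t in a..b, f t ∂μ).im = 0 := by
  have hreal : f = fun t => ((f t).re : ℂ) := funext fun t => Complex.ext rfl (by simp [hf t])
  rw [hreal, intervalIntegral.integral_ofReal, ofReal_im]

theorem im_integral_mul_derivWithin_conj_sub_swap {a b : ℝ} (hab : a < b) {f g : ℝ → ℂ}
    (hf : ContDiffOn ℝ 1 f (Icc a b)) (hg : ContDiffOn ℝ 1 g (Icc a b)) :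
    (∫ t in a..b, f t * derivWithin (fun y => conj (g y)) (Icc a b) t).im
      - (∫ t in a..b, g t * derivWithin (fun y => conj (f y)) (Icc a b) t).im
      = (f b * conj (g b)).im - (f a * conj (g a)).im := by
  have hI : uIcc a b = Icc a b := uIcc_of_le hab.le
  have hderiv : ∀ {h : ℝ → ℂ}, ContDiffOn ℝ 1 h (Icc a b) →
      ∀ t ∈ uIcc a b, HasDerivWithinAt h (derivWithin h (Icc a b) t) (uIcc a b) t := by
    intro h hh t ht
    rw [hI] at ht ⊢
    exact ((hh.differentiableOn one_ne_zero) t ht).hasDerivWithinAt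
  have hcont : ∀ {h : ℝ → ℂ}, ContDiffOn ℝ 1 h (Icc a b) →
      ContinuousOn (derivWithin h (Icc a b)) (Icc a b) := fun hh =>
    hh.continuousOn_derivWithin (uniqueDiffOn_Icc hab) le_rfl
  have hparts : ∫ t in a..b, f t * conj (derivWithin g (Icc a b) t)
      = f b * conj (g b) - f a * conj (g a) - ∫ t in a..b, derivWithin f (Icc a b) t * conj (g t) :=
    intervalIntegral.integral_mul_deriv_eq_deriv_mul_of_hasDerivWithinAt
      (hderiv hf) (fun t ht => (hderiv hg t ht).star)
      ((hcont hf).intervalIntegrable_of_Icc hab.le)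
      ((continuous_star.comp_continuousOn (hcont hg)).intervalIntegrable_of_Icc hab.le)
  have hswap : ∫ t in a..b, derivWithin f (Icc a b) t * conj (g t)
      = conj (∫ t in a..b, g t * conj (derivWithin f (Icc a b) t)) := by
    rw [← intervalIntegral.integral_conj]
    simp only [map_mul, conj_conj, mul_comm]
  simp only [derivWithin_conj]
  rw [hparts, hswap, sub_im, sub_im, conj_im]
  ring

theorem re_integral_sub_mul_conj_midpoint {a b : ℝ} (hab : a ≤ b) {u0 u1 : ℝ → ℂ}
    (hu0 : ContinuousOn u0 (Icc a b)) (hu1 : ContinuousOn u1 (Icc a b)) :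
    (∫ t in a..b, (u1 t - u0 t) * conj ((u0 t + u1 t) / 2)).re
      = ((∫ t in a..b, ‖u1 t‖ ^ 2) - ∫ t in a..b, ‖u0 t‖ ^ 2) / 2 := by
  have hsq : ∀ {v : ℝ → ℂ}, ContinuousOn v (Icc a b) →
      IntervalIntegrable (fun t => ‖v t‖ ^ 2) volume a b := fun hv =>
    ((continuous_norm.comp_continuousOn hv).pow 2).intervalIntegrable_of_Icc hab
  have hint : IntervalIntegrable
      (fun t => (u1 t - u0 t) * conj ((u0 t + u1 t) / 2)) volume a b :=
    ((hu1.sub hu0).mul (continuous_star.comp_continuousOn ((hu0.add hu1).div_const 2)))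
      |>.intervalIntegrable_of_Icc hab
  rw [← intervalIntegral.integral_sub (hsq hu1) (hsq hu0), ← intervalIntegral.integral_div,
    ← reCLM_apply, ← reCLM.intervalIntegral_comp_comm hint]
  simp only [reCLM_apply, re_sub_mul_conj_midpoint]

theorem ldg_cell_charge_balance {a b Δt : ℝ} (hab : a < b) {u0 u1 u ψ : ℝ → ℂ} {Q W : ℝ → ℝ}
    (hu0 : ContDiffOn ℝ 1 u0 (Icc a b)) (hu1 : ContDiffOn ℝ 1 u1 (Icc a b))
    (hψ : ContDiffOn ℝ 1 ψ (Icc a b)) (hQ : ContinuousOn Q (Icc a b))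
    (hu : u = fun t => (u0 t + u1 t) / 2) {ψR uL : ℂ}
    (hE1 : I * (∫ t in a..b, (u1 t - u0 t) * conj (u t))
        - (Δt : ℂ) * (ψR * conj (u b) - ψ a * conj (u a))
        + (Δt : ℂ) * (∫ t in a..b, (ψ t * derivWithin (fun y => conj (u y)) (Icc a b) t
            - (Q t : ℂ) * (u t * conj (u t))))
        - (∫ t in a..b, u t * conj (u t) * (W t : ℂ)) = 0)
    (hE2 : (∫ t in a..b, ψ t * conj (ψ t))
        + (∫ t in a..b, u t * derivWithin (fun y => conj (ψ y)) (Icc a b) t)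
        - (u b * conj (ψ b) - uL * conj (ψ a)) = 0) :
    (∫ t in a..b, ‖u1 t‖ ^ 2) - (∫ t in a..b, ‖u0 t‖ ^ 2)
      = 2 * Δt * ((ψR * conj (u b)).im + (uL * conj (ψ a)).im) := by
  have hu' : ContDiffOn ℝ 1 u (Icc a b) := hu ▸ (hu0.add hu1).div_const 2
  have hcharge : (∫ t in a..b, (u1 t - u0 t) * conj (u t)).re
      = ((∫ t in a..b, ‖u1 t‖ ^ 2) - ∫ t in a..b, ‖u0 t‖ ^ 2) / 2 := by
    subst hu
    exact re_integral_sub_mul_conj_midpoint hab.le hu0.continuousOn hu1.continuousOn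
  have hmass_real : ∀ t, (u t * conj (u t)).im = 0 := fun t => by simp [mul_conj]
  have hQterm : (∫ t in a..b, (Q t : ℂ) * (u t * conj (u t))).im = 0 :=
    intervalIntegral.im_integral_eq_zero_of_im_eq_zero fun t => by simp [hmass_real t]
  have hWterm : (∫ t in a..b, u t * conj (u t) * (W t : ℂ)).im = 0 :=
    intervalIntegral.im_integral_eq_zero_of_im_eq_zero fun t => by simp [hmass_real t]
  have hψterm : (∫ t in a..b, ψ t * conj (ψ t)).im = 0 :=
    intervalIntegral.im_integral_eq_zero_of_im_eq_zero fun t => by simp [mul_conj]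
  have hsplit : (∫ t in a..b, (ψ t * derivWithin (fun y => conj (u y)) (Icc a b) t
      - (Q t : ℂ) * (u t * conj (u t)))).im
      = (∫ t in a..b, ψ t * derivWithin (fun y => conj (u y)) (Icc a b) t).im := by
    have hflux_cont : ContinuousOn
        (fun t => ψ t * derivWithin (fun y => conj (u y)) (Icc a b) t) (Icc a b) := by
      simp only [derivWithin_conj]
      exact hψ.continuousOn.mul (continuous_star.comp_continuousOn
        (hu'.continuousOn_derivWithin (uniqueDiffOn_Icc hab) le_rfl))
    have hpotential_cont : ContinuousOn (fun t => (Q t : ℂ) * (u t * conj (u t))) (Icc a b) :=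
      (continuous_ofReal.comp_continuousOn hQ).mul
        (hu'.continuousOn.mul (continuous_star.comp_continuousOn hu'.continuousOn))
    rw [intervalIntegral.integral_sub (hflux_cont.intervalIntegrable_of_Icc hab.le)
      (hpotential_cont.intervalIntegrable_of_Icc hab.le), sub_im, hQterm, sub_zero]
  have hparts := im_integral_mul_derivWithin_conj_sub_swap hab hψ hu'
  have hswap := im_mul_conj_add_swap (ψ b) (u b)
  have h1 := congrArg im hE1
  have h2 := congrArg im hE2
  simp only [sub_im, add_im, I_mul_im, im_ofReal_mul, hsplit, hWterm, hψterm, zero_im] at h1 h2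
  linear_combination 2 * h1 - 2 * hcharge - 2 * Δt * (hparts + h2 + hswap)

theorem ldg_discrete_charge_conservation_general
    (Δt : ℝ) (J : ℕ)
    (x : ℕ → ℝ) (hx : ∀ j < J, x j < x (j + 1))
    (u0 u1 ψ : ℕ → ℝ → ℂ)
    (hu0 : ∀ c < J, ContDiffOn ℝ 1 (u0 c) (Set.Icc (x c) (x (c + 1))))
    (hu1 : ∀ c < J, ContDiffOn ℝ 1 (u1 c) (Set.Icc (x c) (x (c + 1))))
    (hψ : ∀ c < J, ContDiffOn ℝ 1 (ψ c) (Set.Icc (x c) (x (c + 1))))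
    (Qh ΔW : ℝ → ℝ) (hQ : Continuous Qh)
    (u : ℕ → ℝ → ℂ) (hu : ∀ c, u c = fun t => (u0 c t + u1 c t) / 2)
    (hE1 : ∀ c < J,
      Complex.I * (∫ t in (x c)..(x (c + 1)), (u1 c t - u0 c t) * conj (u c t))
        - (Δt : ℂ) * ((if c + 1 = J then ψ 0 (x 0) else ψ (c + 1) (x (c + 1)))
              * conj (u c (x (c + 1)))
            - ψ c (x c) * conj (u c (x c)))
        + (Δt : ℂ) * (∫ t in (x c)..(x (c + 1)),
            (ψ c t * derivWithin (fun y => conj (u c y)) (Set.Icc (x c) (x (c + 1))) t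
              - (Qh t : ℂ) * (u c t * conj (u c t))))
        - (∫ t in (x c)..(x (c + 1)), u c t * conj (u c t) * (ΔW t : ℂ)) = 0)
    (hE2 : ∀ c < J,
      (∫ t in (x c)..(x (c + 1)), ψ c t * conj (ψ c t))
        + (∫ t in (x c)..(x (c + 1)),
            u c t * derivWithin (fun y => conj (ψ c y)) (Set.Icc (x c) (x (c + 1))) t)
        - (u c (x (c + 1)) * conj (ψ c (x (c + 1)))
            - (if c = 0 then u (J - 1) (x J) else u (c - 1) (x c)) * conj (ψ c (x c))) = 0) :
    ∑ c ∈ Finset.range J, ∫ t in (x c)..(x (c + 1)), ‖u1 c t‖ ^ 2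
      = ∑ c ∈ Finset.range J, ∫ t in (x c)..(x (c + 1)), ‖u0 c t‖ ^ 2 := by
  set outflow : ℕ → ℝ := fun c =>
    ((if c + 1 = J then ψ 0 (x 0) else ψ (c + 1) (x (c + 1))) * conj (u c (x (c + 1)))).im
  set inflow : ℕ → ℝ := fun c =>
    ((if c = 0 then u (J - 1) (x J) else u (c - 1) (x c)) * conj (ψ c (x c))).im
  have hcell : ∀ c ∈ Finset.range J,
      (∫ t in (x c)..(x (c + 1)), ‖u1 c t‖ ^ 2) - (∫ t in (x c)..(x (c + 1)), ‖u0 c t‖ ^ 2)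
        = 2 * Δt * (outflow c + inflow c) := fun c hc =>
    have hc : c < J := Finset.mem_range.mp hc
    ldg_cell_charge_balance (hx c hc) (hu0 c hc) (hu1 c hc) (hψ c hc) hQ.continuousOn (hu c)
      (hE1 c hc) (hE2 c hc)
  have hcancel : ∀ c ∈ Finset.range J,
      outflow (if c = 0 then J - 1 else c - 1) + inflow c = 0 := by
    intro c hc
    have hc : c < J := Finset.mem_range.mp hc
    obtain rfl | hpos := c.eq_zero_or_pos
    · have hJ : J - 1 + 1 = J := by omega
      simp only [outflow, inflow, if_true, hJ]
      exact im_mul_conj_add_swap _ _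
    · have hpred : c - 1 + 1 = c := by omega
      simp only [outflow, inflow, hpos.ne', if_false, hpred, hc.ne]
      exact im_mul_conj_add_swap _ _
  have htotal : ∑ c ∈ Finset.range J, (outflow c + inflow c) = 0 := by
    rw [Finset.sum_add_distrib, ← Finset.sum_range_comp_cyclicPred outflow,
      ← Finset.sum_add_distrib]
    exact Finset.sum_eq_zero hcancel
  rw [← sub_eq_zero, ← Finset.sum_sub_distrib, Finset.sum_congr rfl hcell, ← Finset.mul_sum,
    htotal, mul_zero]

/-- Discrete charge conservation law of the symplectic local discontinuous Galerkin method
(Theorem 2.3).  Cells are indexed by `c = 0, …, J−1`; the cell `I_{c+1}` of the paper is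
`[x c, x (c+1)]`, so `x 0 = L_f` and `x J = L_r`.  The numerical fluxes are `û = u⁻`
(value from the left cell) and `ψ̂ = ψ⁺` (value from the right cell), with periodic
identification of the endpoints `x 0 ≡ x J`.  If every cell satisfies the two LDG equations
(E1), (E2) (tested with the conjugates of `u` and `ψ`), then the discrete charge
`∑_c ∫_{I_c} |u|²` is the same at the two time levels. -/
theorem ldg_discrete_charge_conservation
    (Δt Lf Lr : ℝ) (hΔt : 0 < Δt) (J : ℕ) (hJ : 1 ≤ J)
    (x : ℕ → ℝ) (hx : ∀ j < J, x j < x (j + 1)) (hxf : x 0 = Lf) (hxr : x J = Lr)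
    (u0 u1 ψ : ℕ → ℝ → ℂ)
    (hu0 : ∀ c < J, ContDiffOn ℝ 1 (u0 c) (Set.Icc (x c) (x (c + 1))))
    (hu1 : ∀ c < J, ContDiffOn ℝ 1 (u1 c) (Set.Icc (x c) (x (c + 1))))
    (hψ : ∀ c < J, ContDiffOn ℝ 1 (ψ c) (Set.Icc (x c) (x (c + 1))))
    (Qh ΔW : ℝ → ℝ) (hQ : Continuous Qh) (hW : Continuous ΔW)
    (u : ℕ → ℝ → ℂ) (hu : ∀ c, u c = fun t => (u0 c t + u1 c t) / 2)
    (hE1 : ∀ c < J,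
      Complex.I * (∫ t in (x c)..(x (c + 1)), (u1 c t - u0 c t) * conj (u c t))
        - (Δt : ℂ) * ((if c + 1 = J then ψ 0 (x 0) else ψ (c + 1) (x (c + 1)))
              * conj (u c (x (c + 1)))
            - ψ c (x c) * conj (u c (x c)))
        + (Δt : ℂ) * (∫ t in (x c)..(x (c + 1)),
            (ψ c t * derivWithin (fun y => conj (u c y)) (Set.Icc (x c) (x (c + 1))) t
              - (Qh t : ℂ) * (u c t * conj (u c t))))
        - (∫ t in (x c)..(x (c + 1)), u c t * conj (u c t) * (ΔW t : ℂ)) = 0)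
    (hE2 : ∀ c < J,
      (∫ t in (x c)..(x (c + 1)), ψ c t * conj (ψ c t))
        + (∫ t in (x c)..(x (c + 1)),
            u c t * derivWithin (fun y => conj (ψ c y)) (Set.Icc (x c) (x (c + 1))) t)
        - (u c (x (c + 1)) * conj (ψ c (x (c + 1)))
            - (if c = 0 then u (J - 1) (x J) else u (c - 1) (x c)) * conj (ψ c (x c))) = 0) :
    ∑ c ∈ Finset.range J, ∫ t in (x c)..(x (c + 1)), ‖u1 c t‖ ^ 2
      = ∑ c ∈ Finset.range J, ∫ t in (x c)..(x (c + 1)), ‖u0 c t‖ ^ 2 :=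
  ldg_discrete_charge_conservation_general Δt J x hx u0 u1 ψ hu0 hu1 hψ Qh ΔW hQ u hu hE1 hE2
end

section
/- Second-moment error of squared Gaussian truncation at level κ = √(4|ln Δt|) (single-mode content of property (ii) of the truncated Wiener increment, E‖(ΔW̃_n)² − (ΔW_n)²‖² ≤ K Δt⁴): There exists a constant K > 0 such that for every Δt ∈ (0, 1], setting κ = √(4·ln(1/Δt)), one has ∫_ℝ (x² − ζ^κ(x)²)² dμ(x) ≤ K·Δt², where μ is the standard Gaussian measure N(0,1) on ℝ and ζ^κ(x) = max(−κ, min(κ, x)). Consequently Δt²·∫_ℝ (x² − ζ^κ(x)²)² dμ(x) ≤ K·Δt⁴. -/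
open MeasureTheory ProbabilityTheory
open scoped ENNReal NNReal

lemma my_sq_le_exp {t : ℝ} (ht : 0 ≤ t) : t ^ 2 ≤ 4 * Real.exp t := by
  have h1 : 1 + t / 2 ≤ Real.exp (t / 2) := by
    have := Real.add_one_le_exp (t / 2); linarith
  have h2 : Real.exp (t / 2) * Real.exp (t / 2) = Real.exp t := by
    rw [← Real.exp_add]; ring_nf
  nlinarith [Real.exp_pos (t / 2)]

lemma my_key {κ u : ℝ} (hκ : 0 ≤ κ) (hu : 0 ≤ u) :
    (u ^ 2 + 2 * κ * u) ^ 2 ≤ 160 * Real.exp (κ * u + u ^ 2 / 4) := by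
  have h1 : (u ^ 2 / 4) ^ 2 ≤ 4 * Real.exp (u ^ 2 / 4) := my_sq_le_exp (by positivity)
  have h2 : (κ * u) ^ 2 ≤ 4 * Real.exp (κ * u) := my_sq_le_exp (by positivity)
  have h3 : Real.exp (u ^ 2 / 4) ≤ Real.exp (κ * u + u ^ 2 / 4) :=
    Real.exp_le_exp.mpr (by nlinarith)
  have h4 : Real.exp (κ * u) ≤ Real.exp (κ * u + u ^ 2 / 4) :=
    Real.exp_le_exp.mpr (by nlinarith)
  nlinarith [sq_nonneg (u ^ 2 - 2 * κ * u), Real.exp_pos (κ * u + u ^ 2 / 4)]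

lemma my_ptwise {κ : ℝ} (hκ : 0 ≤ κ) (x : ℝ) :
    (x ^ 2 - (max (-κ) (min κ x)) ^ 2) ^ 2 ≤
      160 * Real.exp (-κ ^ 2 / 2) *
        (Real.exp (x ^ 2 / 2 - (x - κ) ^ 2 / 4) + Real.exp (x ^ 2 / 2 - (x + κ) ^ 2 / 4)) := by
  rcases le_total x κ with hxκ | hxκ
  · rcases le_total (-κ) x with hx | hx
    · rw [min_eq_right hxκ, max_eq_right hx]
      rw [sub_self, zero_pow (two_ne_zero)]
      positivity
    · -- x ≤ -κ
      rw [min_eq_right hxκ, max_eq_left hx]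
      obtain ⟨u, hu, rfl⟩ : ∃ u, 0 ≤ u ∧ x = -(u + κ) :=
        ⟨-x - κ, by linarith, by ring⟩
      have hA : Real.exp (-κ ^ 2 / 2) * Real.exp ((-(u + κ)) ^ 2 / 2 - (-(u + κ) + κ) ^ 2 / 4)
          = Real.exp (κ * u + u ^ 2 / 4) := by
        rw [← Real.exp_add]; congr 1; ring
      have hk := my_key hκ hu
      have hf : ((-(u + κ)) ^ 2 - (-κ) ^ 2) ^ 2 = (u ^ 2 + 2 * κ * u) ^ 2 := by ring
      rw [hf]
      nlinarith [Real.exp_pos ((-(u + κ)) ^ 2 / 2 - (-(u + κ) - κ) ^ 2 / 4),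
        Real.exp_pos (-κ ^ 2 / 2)]
  · -- κ ≤ x
    rw [min_eq_left hxκ, max_eq_right (by linarith : -κ ≤ κ)]
    obtain ⟨u, hu, rfl⟩ : ∃ u, 0 ≤ u ∧ x = u + κ :=
      ⟨x - κ, by linarith, by ring⟩
    have hA : Real.exp (-κ ^ 2 / 2) * Real.exp ((u + κ) ^ 2 / 2 - (u + κ - κ) ^ 2 / 4)
        = Real.exp (κ * u + u ^ 2 / 4) := by
      rw [← Real.exp_add]; congr 1; ring
    have hk := my_key hκ hu
    have hf : ((u + κ) ^ 2 - κ ^ 2) ^ 2 = (u ^ 2 + 2 * κ * u) ^ 2 := by ring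
    rw [hf]
    nlinarith [Real.exp_pos ((u + κ) ^ 2 / 2 - (u + κ + κ) ^ 2 / 4),
      Real.exp_pos (-κ ^ 2 / 2)]

lemma my_density_eq (c x : ℝ) :
    gaussianPDFReal 0 1 x * Real.exp (x ^ 2 / 2 - (x - c) ^ 2 / 4)
      = (Real.sqrt (2 * Real.pi))⁻¹ * Real.exp (-(1/4) * (x - c) ^ 2) := by
  rw [gaussianPDFReal]
  simp only [NNReal.coe_one, mul_one, sub_zero]
  rw [mul_assoc, ← Real.exp_add]
  congr 2
  ring

lemma my_intexp (c : ℝ) :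
    Integrable (fun x => Real.exp (x ^ 2 / 2 - (x - c) ^ 2 / 4)) (gaussianReal 0 1) ∧
    ∫ x, Real.exp (x ^ 2 / 2 - (x - c) ^ 2 / 4) ∂(gaussianReal 0 1) = Real.sqrt 2 := by
  have hmeas : Measurable fun x : ℝ => (gaussianPDFReal 0 1 x).toNNReal :=
    (measurable_gaussianPDFReal 0 1).real_toNNReal
  have hpdf : gaussianPDF 0 1 = fun x => ((gaussianPDFReal 0 1 x).toNNReal : ℝ≥0∞) := rfl
  have hmu : gaussianReal 0 1 =
      volume.withDensity fun x => ((gaussianPDFReal 0 1 x).toNNReal : ℝ≥0∞) := by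
    rw [gaussianReal_of_var_ne_zero _ one_ne_zero, hpdf]
  have hsmul : (fun x : ℝ => (gaussianPDFReal 0 1 x).toNNReal •
        Real.exp (x ^ 2 / 2 - (x - c) ^ 2 / 4))
      = fun x => (Real.sqrt (2 * Real.pi))⁻¹ * Real.exp (-(1/4) * (x - c) ^ 2) := by
    funext x
    rw [NNReal.smul_def, Real.coe_toNNReal _ (gaussianPDFReal_nonneg 0 1 x)]
    exact my_density_eq c x
  have hint2 : Integrable
      (fun x => (Real.sqrt (2 * Real.pi))⁻¹ * Real.exp (-(1/4) * (x - c) ^ 2)) volume := by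
    exact ((integrable_exp_neg_mul_sq (by norm_num : (0:ℝ) < 1/4)).comp_sub_right c).const_mul _
  constructor
  · rw [hmu, integrable_withDensity_iff_integrable_smul hmeas, hsmul]
    exact hint2
  · rw [hmu, integral_withDensity_eq_integral_smul hmeas]
    have : (fun x : ℝ => (gaussianPDFReal 0 1 x).toNNReal •
        Real.exp (x ^ 2 / 2 - (x - c) ^ 2 / 4))
        = fun x => (Real.sqrt (2 * Real.pi))⁻¹ * Real.exp (-(1/4) * (x - c) ^ 2) := hsmul
    rw [this, integral_const_mul,
      integral_sub_right_eq_self (fun x => Real.exp (-(1/4) * x ^ 2)) c,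
      integral_gaussian]
    rw [← Real.sqrt_inv, ← Real.sqrt_mul (by positivity)]
    congr 1
    have hπ : Real.pi ≠ 0 := Real.pi_ne_zero
    field_simp
    ring

/-- Second-moment error of the squared Gaussian truncation at level `κ = √(4|ln Δt|)`
(single-mode content of property (ii) of the truncated Wiener increment,
`E‖(ΔW̃_n)² − (ΔW_n)²‖² ≤ K Δt⁴`): there is a constant `K > 0` such that for every
`Δt ∈ (0,1]`, with `κ = √(4 ln(1/Δt))` and `ζ^κ(x) = max(−κ, min(κ, x))`, one has
`∫ (x² − ζ^κ(x)²)² dN(0,1) ≤ K Δt²`, and consequently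
`Δt² · ∫ (x² − ζ^κ(x)²)² dN(0,1) ≤ K Δt⁴`. -/
theorem gaussian_truncation_square_second_moment :
    ∃ K : ℝ, 0 < K ∧ ∀ Δt : ℝ, Δt ∈ Set.Ioc (0 : ℝ) 1 →
      (∫ x : ℝ,
          (x ^ 2 - (max (-(Real.sqrt (4 * Real.log (1 / Δt))))
              (min (Real.sqrt (4 * Real.log (1 / Δt))) x)) ^ 2) ^ 2
          ∂(gaussianReal 0 1)) ≤ K * Δt ^ 2 ∧
      Δt ^ 2 * (∫ x : ℝ,
          (x ^ 2 - (max (-(Real.sqrt (4 * Real.log (1 / Δt))))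
              (min (Real.sqrt (4 * Real.log (1 / Δt))) x)) ^ 2) ^ 2
          ∂(gaussianReal 0 1)) ≤ K * Δt ^ 4 := by
  refine ⟨1000, by norm_num, fun Δt hΔt => ?_⟩
  obtain ⟨hΔt0, hΔt1⟩ := hΔt
  set κ : ℝ := Real.sqrt (4 * Real.log (1 / Δt)) with hκdef
  have hlog : 0 ≤ Real.log (1 / Δt) :=
    Real.log_nonneg (by rw [le_div_iff₀ hΔt0]; linarith)
  have hκ0 : 0 ≤ κ := Real.sqrt_nonneg _
  have hκ2 : κ ^ 2 = 4 * Real.log (1 / Δt) := Real.sq_sqrt (by linarith)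
  have hexp : Real.exp (-κ ^ 2 / 2) = Δt ^ 2 := by
    rw [hκ2, one_div, Real.log_inv]
    have : -(4 * -Real.log Δt) / 2 = Real.log Δt + Real.log Δt := by ring
    rw [this, Real.exp_add, Real.exp_log hΔt0]
    ring
  have h1 := my_intexp κ
  have h2 := my_intexp (-κ)
  simp only [sub_neg_eq_add] at h2
  -- the dominating function
  set G : ℝ → ℝ := fun x => 160 * Real.exp (-κ ^ 2 / 2) *
    (Real.exp (x ^ 2 / 2 - (x - κ) ^ 2 / 4) + Real.exp (x ^ 2 / 2 - (x + κ) ^ 2 / 4)) with hGdef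
  have hGint : Integrable G (gaussianReal 0 1) := ((h1.1.add h2.1).const_mul _)
  have hGval : ∫ x, G x ∂(gaussianReal 0 1)
      = 160 * Real.exp (-κ ^ 2 / 2) * (Real.sqrt 2 + Real.sqrt 2) := by
    rw [hGdef]
    rw [integral_const_mul, integral_add h1.1 h2.1, h1.2, h2.2]
  have hmono : (∫ x : ℝ, (x ^ 2 - (max (-κ) (min κ x)) ^ 2) ^ 2 ∂(gaussianReal 0 1))
      ≤ ∫ x, G x ∂(gaussianReal 0 1) := by
    refine integral_mono_of_nonneg (ae_of_all _ fun x => by positivity) hGint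
      (ae_of_all _ fun x => my_ptwise hκ0 x)
  have hsqrt2 : Real.sqrt 2 ≤ 2 := by
    nlinarith [Real.sq_sqrt (by norm_num : (0:ℝ) ≤ 2), Real.sqrt_nonneg 2]
  have hIle : (∫ x : ℝ, (x ^ 2 - (max (-κ) (min κ x)) ^ 2) ^ 2 ∂(gaussianReal 0 1))
      ≤ 1000 * Δt ^ 2 := by
    refine hmono.trans ?_
    rw [hGval, hexp]
    nlinarith [sq_nonneg Δt]
  refine ⟨hIle, ?_⟩
  have hnn : (0:ℝ) ≤ Δt ^ 2 := sq_nonneg _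
  calc Δt ^ 2 * _ ≤ Δt ^ 2 * (1000 * Δt ^ 2) := mul_le_mul_of_nonneg_left hIle hnn
    _ = 1000 * Δt ^ 4 := by ring
end
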